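/- Let G be a minimally 3-connected finite simple graph. Then every edge of G joining two vertices of degree at least 4 is contractible. -/

import Mathlib

open scoped Classical in
/-- Number of occurrences of `a` in the list `l` (classical count). -/
noncomputable def listCount {α : Type*} (l : List α) (a : α) : ℕ := l.count a

namespace SimpleGraph

variable {V : Type*}

/-- A spanning closed walk that uses each edge at most twice. -/
def IsGoodWalk {G : SimpleGraph V} {v : V} (w : G.Walk v v) : Prop :=
  (∀ u, u ∈ w.support) ∧ ∀ e, listCount w.edges e ≤ 2

/-- The closed walk `w` meets the vertex `u` at most `k` times, where the initial vertex of
the closed walk is counted once for its appearance as start/end. -/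
def VisitsAtMost {G : SimpleGraph V} {v : V} (w : G.Walk v v) (u : V) (k : ℕ) : Prop :=
  listCount w.support.tail u ≤ k

/-- `G` has a `k`-walk: a spanning closed walk using each edge at most twice and meeting
each vertex at most `k` times. -/
def HasKWalk (G : SimpleGraph V) (k : ℕ) : Prop :=
  ∃ (v : V) (w : G.Walk v v), IsGoodWalk w ∧ ∀ u, VisitsAtMost w u k

/-- `G` has a `k`-trail: a spanning closed trail meeting each vertex at most `k` times. -/
def HasKTrail (G : SimpleGraph V) (k : ℕ) : Prop :=
  ∃ (v : V) (w : G.Walk v v), w.IsTrail ∧ (∀ u, u ∈ w.support) ∧ ∀ u, VisitsAtMost w u k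

/-- `G` is 3-connected: at least 4 vertices, and deleting any set of at most 2 vertices
leaves a connected graph. -/
def ThreeConnected (G : SimpleGraph V) : Prop :=
  4 ≤ Nat.card V ∧ ∀ S : Set V, S.ncard ≤ 2 → (G.induce Sᶜ).Connected

/-- `G` is 5-connected: at least 6 vertices, and deleting any set of at most 4 vertices
leaves a connected graph. -/
def FiveConnected (G : SimpleGraph V) : Prop :=
  6 ≤ Nat.card V ∧ ∀ S : Set V, S.ncard ≤ 4 → (G.induce Sᶜ).Connected

/-- `G` is minimally 3-connected. -/
def MinimallyThreeConnected (G : SimpleGraph V) : Prop :=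
  ThreeConnected G ∧ ∀ e ∈ G.edgeSet, ¬ ThreeConnected (G.deleteEdges {e})

/-- The degree of `v` in `G` (as the cardinality of its neighbor set). -/
noncomputable def degreeN (G : SimpleGraph V) (v : V) : ℕ := (G.neighborSet v).ncard

/-- `R` is a minor of `G`: there are nonempty pairwise disjoint branch sets, one
for each vertex of `R`, each inducing a connected subgraph of `G`, such that every
edge of `R` is realized by an edge of `G` between the corresponding branch sets. -/
def IsMinorOf {W : Type*} (R : SimpleGraph W) (G : SimpleGraph V) : Prop :=
  ∃ B : W → Set V,
    (∀ w, (B w).Nonempty) ∧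
    (Pairwise fun w₁ w₂ => Disjoint (B w₁) (B w₂)) ∧
    (∀ w, (G.induce (B w)).Connected) ∧
    ∀ ⦃w₁ w₂⦄, R.Adj w₁ w₂ → ∃ u ∈ B w₁, ∃ u' ∈ B w₂, G.Adj u u'

/-- The graph `G/xy` obtained from `G` by contracting the edge between `x` and `y`
(the vertex `y` is merged into `x`). -/
def contractEdge (G : SimpleGraph V) (x y : V) : SimpleGraph {v : V // v ≠ y} where
  Adj a b := a ≠ b ∧
    (G.Adj a.val b.val ∨ (a.val = x ∧ G.Adj y b.val) ∨ (b.val = x ∧ G.Adj a.val y))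
  symm := by
    constructor
    rintro a b ⟨hab, h | ⟨h1, h2⟩ | ⟨h1, h2⟩⟩
    · exact ⟨hab.symm, Or.inl h.symm⟩
    · exact ⟨hab.symm, Or.inr (Or.inr ⟨h1, h2.symm⟩)⟩
    · exact ⟨hab.symm, Or.inr (Or.inl ⟨h1, h2.symm⟩)⟩
  loopless := by constructor; rintro a ⟨h, -⟩; exact h rfl

open scoped Classical in
/-- The projection sending every vertex of `A` to the contracted vertex `none`
and every other vertex to itself. -/
noncomputable def projSet (A : Set V) (u : V) : Option {v : V // v ∉ A} :=
  if h : u ∈ A then none else some ⟨u, h⟩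

/-- The graph `G/A` obtained from `G` by identifying all vertices of `A` to a single
vertex (deleting loops and merging parallel edges). -/
def contractSet (G : SimpleGraph V) (A : Set V) : SimpleGraph (Option {v : V // v ∉ A}) where
  Adj a b := a ≠ b ∧ ∃ u u', G.Adj u u' ∧ projSet A u = a ∧ projSet A u' = b
  symm := by
    constructor
    rintro a b ⟨hab, u, u', h1, h2, h3⟩
    exact ⟨hab.symm, u', u, h1.symm, h3, h2⟩
  loopless := by constructor; rintro a ⟨h, -⟩; exact h rfl

/-- `s` is an independent set of `G`. -/
def IsIndepSet' (G : SimpleGraph V) (s : Set V) : Prop :=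
  s.Pairwise fun a b => ¬ G.Adj a b

/-- The number of connected components of `G`. -/
noncomputable def numComponents (G : SimpleGraph V) : ℕ := Nat.card G.ConnectedComponent

/-- `G` is `m`-tree-connected: it has `m` pairwise edge-disjoint spanning trees. -/
def TreeConnected (m : ℕ) (G : SimpleGraph V) : Prop :=
  ∃ T : Fin m → SimpleGraph V, (∀ i, T i ≤ G) ∧ (∀ i, (T i).IsTree) ∧
    Pairwise fun i j => Disjoint (T i).edgeSet (T j).edgeSet

/-- `A` is the vertex set of an `m`-tree-connected component of `G`, i.e. a maximal
subset of vertices inducing an `m`-tree-connected subgraph. -/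
def IsMaxTCSet (m : ℕ) (G : SimpleGraph V) (A : Set V) : Prop :=
  TreeConnected m (G.induce A) ∧ ∀ B : Set V, A ⊆ B → TreeConnected m (G.induce B) → B = A

/-- `e_G(S)`: the number of edges of `G` with both ends in `S`. -/
noncomputable def edgesWithin (G : SimpleGraph V) (S : Set V) : ℕ :=
  {e ∈ G.edgeSet | ∀ v ∈ e, v ∈ S}.ncard

/-- `Ω(G) = |P| - e_G(P)/2`, where `P` is the partition of `V(G)` into the
`2`-tree-connected components of `G` and `e_G(P)` is the number of edges of `G`
joining different parts of `P`. -/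
noncomputable def Omega (G : SimpleGraph V) : ℚ :=
  ({A : Set V | IsMaxTCSet 2 G A}.ncard : ℚ) -
    (1 / 2) * ({e ∈ G.edgeSet | ¬ ∃ A, IsMaxTCSet 2 G A ∧ ∀ v ∈ e, v ∈ A}.ncard : ℚ)

end SimpleGraph

/-!
Suppose `G/xy` is not 3-connected. Then `G` has a separation `(P, Q)` with separator
`{x, y, z}`. By minimality, `G - xy` has a separation `(K, L)` whose separator `S` has at most
two vertices; as `G` is 3-connected, `x ∈ K`, `y ∈ L`, and `xy` is the only edge of `G` between
`K` and `L`. Both `P` and `Q` meet `S`, since otherwise `{x, z}` or `{y, z}` would separate `G`;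
so `S = {u, v}` with `u ∈ P`, `v ∈ Q`, and `z ∈ K ∪ L`, say `z ∈ K`. Now `{u, y}` and `{v, y}`
would separate `P ∩ L` and `Q ∩ L` from `x`, hence `L = {y}`, and `y` has no neighbours besides
`x`, `u` and `v`.
-/

theorem Set.ncard_pair_le {α : Type*} (a b : α) : ({a, b} : Set α).ncard ≤ 2 :=
  (Set.ncard_insert_le a {b}).trans (by rw [Set.ncard_singleton])

theorem Set.exists_eq_pair_of_ncard_le_two {α : Type*} [Finite α] {s : Set α} (hs : s.ncard ≤ 2)
    {a : α} (ha : a ∈ s) : ∃ b, s = {a, b} := by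
  have hdiff : (s \ {a}).ncard ≤ 1 := by
    rw [Set.ncard_sdiff_singleton_of_mem ha]
    omega
  rcases (Set.ncard_le_one_iff_eq).1 hdiff with h | ⟨b, h⟩
  · exact ⟨a, by rw [Set.pair_eq_singleton, ← Set.insert_eq_of_mem ha,
      ← Set.insert_sdiff_singleton, h, insert_empty_eq]⟩
  · exact ⟨b, by rw [← h, Set.insert_sdiff_singleton, Set.insert_eq_of_mem ha]⟩

theorem Set.image_val_union_image_val_eq_compl {α : Type*} {y : α}
    {S' P' Q' : Set {v : α // v ≠ y}} (h : P' ∪ Q' = S'ᶜ) :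
    Subtype.val '' P' ∪ Subtype.val '' Q' = (insert y (Subtype.val '' S'))ᶜ := by
  rw [← Set.image_union, h, Set.image_compl_eq_range_sdiff_image Subtype.val_injective,
    Subtype.range_coe_subtype]
  ext a
  simp only [Set.mem_sdiff, Set.mem_ofPred_eq, Set.mem_compl_iff, Set.mem_insert_iff, not_or]

namespace SimpleGraph

variable {V : Type*} {G : SimpleGraph V} {S A B : Set V}

structure IsSeparation (G : SimpleGraph V) (S A B : Set V) : Prop where
  left_nonempty : A.Nonempty
  right_nonempty : B.Nonempty
  disjoint : Disjoint A B
  union_eq : A ∪ B = Sᶜ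
  not_adj : ∀ a ∈ A, ∀ b ∈ B, ¬ G.Adj a b

namespace IsSeparation

theorem symm (h : G.IsSeparation S A B) : G.IsSeparation S B A where
  left_nonempty := h.right_nonempty
  right_nonempty := h.left_nonempty
  disjoint := h.disjoint.symm
  union_eq := by rw [Set.union_comm, h.union_eq]
  not_adj b hb a ha hba := h.not_adj a ha b hb hba.symm

theorem notMem_separator_of_mem_left (h : G.IsSeparation S A B) {a : V} (ha : a ∈ A) :
    a ∉ S := by
  simpa only [← Set.mem_compl_iff, ← h.union_eq] using Set.mem_union_left B ha

theorem ne_of_mem_left (h : G.IsSeparation S A B) {a b : V} (ha : a ∈ A) (hb : b ∈ S) :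
    a ≠ b :=
  fun hab ↦ h.notMem_separator_of_mem_left ha (hab ▸ hb)

theorem notMem_right_of_mem_left (h : G.IsSeparation S A B) {a : V} (ha : a ∈ A) : a ∉ B :=
  Set.disjoint_left.1 h.disjoint ha

theorem mem_or_mem_or_mem (h : G.IsSeparation S A B) (a : V) : a ∈ A ∨ a ∈ B ∨ a ∈ S := by
  by_cases haS : a ∈ S
  · exact Or.inr (Or.inr haS)
  · rw [← Set.mem_compl_iff, ← h.union_eq] at haS
    exact haS.elim Or.inl (Or.inr ∘ Or.inl)

theorem mem_left_or_mem_separator_of_adj (h : G.IsSeparation S A B) {a b : V} (ha : a ∈ A)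
    (hab : G.Adj a b) : b ∈ A ∨ b ∈ S := by
  rcases h.mem_or_mem_or_mem b with hb | hb | hb
  exacts [Or.inl hb, (h.not_adj a ha b hb hab).elim, Or.inr hb]

variable {x y : V}

theorem of_deleteEdges (h : (G.deleteEdges {s(x, y)}).IsSeparation S A B) :
    G.IsSeparation S A B ∨ (x ∈ A ∧ y ∈ B) ∨ (y ∈ A ∧ x ∈ B) := by
  refine or_iff_not_imp_right.2 fun hxy ↦ { h with not_adj := fun a ha b hb hab ↦ ?_ }
  refine h.not_adj a ha b hb ((deleteEdges_adj ..).2 ⟨hab, ?_⟩)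
  rw [Set.mem_singleton_iff, Sym2.eq_iff]
  rintro (⟨rfl, rfl⟩ | ⟨rfl, rfl⟩)
  exacts [hxy (Or.inl ⟨ha, hb⟩), hxy (Or.inr ⟨ha, hb⟩)]

theorem eq_of_adj_of_deleteEdges (h : (G.deleteEdges {s(x, y)}).IsSeparation S A B)
    (hx : x ∈ A) {a b : V} (ha : a ∈ A) (hb : b ∈ B) (hab : G.Adj a b) : a = x ∧ b = y := by
  by_contra hne
  refine h.not_adj a ha b hb ((deleteEdges_adj ..).2 ⟨hab, ?_⟩)
  rw [Set.mem_singleton_iff, Sym2.eq_iff]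
  rintro (hxy | ⟨rfl, rfl⟩)
  exacts [hne hxy, h.notMem_right_of_mem_left hx hb]

variable {S' P' Q' : Set {v : V // v ≠ y}}

theorem of_contractEdge (h : (G.contractEdge x y).IsSeparation S' P' Q') :
    G.IsSeparation (insert y (Subtype.val '' S')) (Subtype.val '' P') (Subtype.val '' Q') where
  left_nonempty := h.left_nonempty.image _
  right_nonempty := h.right_nonempty.image _
  disjoint := (Set.disjoint_image_iff Subtype.val_injective).2 h.disjoint
  union_eq := Set.image_val_union_image_val_eq_compl h.union_eq
  not_adj := by
    rintro _ ⟨a, ha, rfl⟩ _ ⟨b, hb, rfl⟩ hab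
    exact h.not_adj a ha b hb ⟨fun hab' ↦ hab.ne (congrArg Subtype.val hab'), Or.inl hab⟩

theorem of_contractEdge_of_mem_left (h : (G.contractEdge x y).IsSeparation S' P' Q')
    (hxy : x ≠ y) (hx : ⟨x, hxy⟩ ∈ P') :
    G.IsSeparation (Subtype.val '' S') (insert y (Subtype.val '' P')) (Subtype.val '' Q') where
  left_nonempty := Set.insert_nonempty _ _
  right_nonempty := h.right_nonempty.image _
  disjoint := Set.disjoint_insert_left.2
    ⟨fun ⟨b, _, hb⟩ ↦ b.2 hb, (Set.disjoint_image_iff Subtype.val_injective).2 h.disjoint⟩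
  union_eq := by
    rw [Set.insert_union, Set.image_val_union_image_val_eq_compl h.union_eq]
    ext a
    by_cases hay : a = y <;> simp [hay]
  not_adj := by
    rintro _ (rfl | ⟨a, ha, rfl⟩) _ ⟨b, hb, rfl⟩ hab
    · have hbx : ⟨x, hxy⟩ ≠ b := fun hbx ↦ h.notMem_right_of_mem_left hx (hbx ▸ hb)
      exact h.not_adj _ hx b hb ⟨hbx, Or.inr (Or.inl ⟨rfl, hab⟩)⟩
    · exact h.not_adj a ha b hb ⟨fun hab' ↦ hab.ne (congrArg Subtype.val hab'), Or.inl hab⟩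

end IsSeparation

theorem exists_isSeparation_of_not_connected (hS : Sᶜ.Nonempty)
    (h : ¬ (G.induce Sᶜ).Connected) : ∃ A B, G.IsSeparation S A B := by
  have : Nonempty ↥Sᶜ := hS.to_subtype
  obtain ⟨u, v, huv⟩ : ∃ u v : ↥Sᶜ, ¬ (G.induce Sᶜ).Reachable u v := by
    by_contra! hreach
    exact h ⟨hreach⟩
  set A : Set V := Subtype.val '' {w | (G.induce Sᶜ).Reachable u w}
  refine ⟨A, Sᶜ \ A, ⟨u, ⟨u, .refl u, rfl⟩⟩, ⟨v, v.2, ?_⟩, Set.disjoint_sdiff_right, ?_, ?_⟩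
  · rintro ⟨w, hw, hwv⟩
    exact huv (Subtype.ext hwv ▸ hw)
  · exact Set.union_sdiff_cancel (Set.image_subset_iff.2 fun w _ ↦ w.2)
  · rintro _ ⟨a, ha, rfl⟩ b ⟨hbS, hbA⟩ hab
    exact hbA ⟨⟨b, hbS⟩, ha.trans (Adj.reachable (G := G.induce Sᶜ) hab), rfl⟩

theorem exists_isSeparation_of_not_threeConnected (hcard : 4 ≤ Nat.card V)
    (h : ¬ G.ThreeConnected) : ∃ S : Set V, S.ncard ≤ 2 ∧ ∃ A B, G.IsSeparation S A B := by
  obtain ⟨S, hS, hconn⟩ : ∃ S : Set V, S.ncard ≤ 2 ∧ ¬ (G.induce Sᶜ).Connected := by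
    by_contra! hall
    exact h ⟨hcard, hall⟩
  refine ⟨S, hS, exists_isSeparation_of_not_connected ?_ hconn⟩
  rw [Set.nonempty_compl]
  rintro rfl
  rw [Set.ncard_univ] at hS
  omega

theorem mem_of_reachable_of_adj_closed {R : Set V}
    (hA : ∀ a ∈ A, ∀ b, G.Adj a b → b ∈ A ∪ R) {s t : ↥Rᶜ}
    (hst : (G.induce Rᶜ).Reachable s t) (hs : s.1 ∈ A) : t.1 ∈ A := by
  by_contra ht
  obtain ⟨w⟩ := hst
  obtain ⟨d, -, hd, hd'⟩ := w.exists_boundary_dart {v | v.1 ∈ A} hs ht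
  exact (hA _ hd _ d.adj).elim hd' d.snd.2

theorem degreeN_add_one_le_card [Finite V] (v : V) : G.degreeN v + 1 ≤ Nat.card V := by
  rw [degreeN, ← Set.ncard_insert_of_notMem (G.notMem_neighborSet_self (a := v)),
    ← Set.ncard_univ]
  exact Set.ncard_le_ncard (Set.subset_univ _)

namespace ThreeConnected

theorem mem_of_adj_closed (hG : G.ThreeConnected) {R : Set V} (hR : R.ncard ≤ 2)
    (hA : ∀ a ∈ A, ∀ b, G.Adj a b → b ∈ A ∪ R) {a c : V} (ha : a ∈ A) (haR : a ∉ R)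
    (hcR : c ∉ R) : c ∈ A :=
  mem_of_reachable_of_adj_closed (s := ⟨a, haR⟩) (t := ⟨c, hcR⟩) hA
    ((hG.2 R hR).preconnected _ _) ha

theorem not_isSeparation (hG : G.ThreeConnected) (hS : S.ncard ≤ 2) :
    ¬ G.IsSeparation S A B := by
  intro h
  obtain ⟨a, ha⟩ := h.left_nonempty
  obtain ⟨b, hb⟩ := h.right_nonempty
  refine h.notMem_right_of_mem_left ?_ hb
  exact hG.mem_of_adj_closed hS (fun _ ha' _ hab ↦ h.mem_left_or_mem_separator_of_adj ha' hab) ha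
    (h.notMem_separator_of_mem_left ha) (h.symm.notMem_separator_of_mem_left hb)

end ThreeConnected

theorem MinimallyThreeConnected.exists_isSeparation_deleteEdges
    (hG : G.MinimallyThreeConnected) {x y : V} (hxy : G.Adj x y) :
    ∃ S K L, S.ncard ≤ 2 ∧ (G.deleteEdges {s(x, y)}).IsSeparation S K L ∧ x ∈ K ∧ y ∈ L := by
  obtain ⟨S, hS, K, L, h⟩ :=
    exists_isSeparation_of_not_threeConnected hG.1.1 (hG.2 _ (G.mem_edgeSet.2 hxy))
  rcases h.of_deleteEdges with hsep | hxK | hyK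
  · exact (hG.1.not_isSeparation hS hsep).elim
  · exact ⟨S, K, L, hS, h, hxK⟩
  · exact ⟨S, L, K, hS, h.symm, hyK.symm⟩

namespace ThreeConnected

variable {x y z : V} {K L P Q : Set V}

theorem exists_isSeparation_of_not_threeConnected_contractEdge [Finite V]
    (hG : G.ThreeConnected) (hxy : x ≠ y) (hcard : 5 ≤ Nat.card V)
    (h : ¬ (G.contractEdge x y).ThreeConnected) : ∃ z P Q, G.IsSeparation {x, y, z} P Q := by
  have hcard' : 4 ≤ Nat.card {v : V // v ≠ y} := by
    have := Set.ncard_add_ncard_compl ({y} : Set V)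
    rw [Set.ncard_singleton] at this
    change 4 ≤ Nat.card ↥({y}ᶜ : Set V)
    rw [Nat.card_coe_set_eq]
    omega
  obtain ⟨S', hS', P', Q', h'⟩ := exists_isSeparation_of_not_threeConnected hcard' h
  by_cases hx : ⟨x, hxy⟩ ∈ S'
  · obtain ⟨z, rfl⟩ := Set.exists_eq_pair_of_ncard_le_two hS' hx
    refine ⟨z.1, Subtype.val '' P', Subtype.val '' Q', ?_⟩
    simpa only [Set.image_pair, Set.insert_comm y] using h'.of_contractEdge
  · have hS'' : (Subtype.val '' S').ncard ≤ 2 := by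
      rwa [Set.ncard_image_of_injective _ Subtype.val_injective]
    rw [← Set.mem_compl_iff, ← h'.union_eq] at hx
    rcases hx with hxP | hxQ
    · exact (hG.not_isSeparation hS'' (h'.of_contractEdge_of_mem_left hxy hxP)).elim
    · exact (hG.not_isSeparation hS'' (h'.symm.of_contractEdge_of_mem_left hxy hxQ)).elim

theorem disjoint_left_of_disjoint_separator (hG : G.ThreeConnected)
    (hKL : (G.deleteEdges {s(x, y)}).IsSeparation S K L) (hxK : x ∈ K) (hyL : y ∈ L)
    (hPQ : G.IsSeparation {x, y, z} P Q) (hPS : Disjoint P S) : Disjoint P K := by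
  -- `P ∩ K` is attached to the rest of `G` only through `x` and `z`.
  have hclosed : ∀ a ∈ P ∩ K, ∀ b, G.Adj a b → b ∈ P ∩ K ∪ {x, z} := by
    rintro a ⟨haP, haK⟩ b hab
    have hKL_adj : ∀ {c}, c ∈ L → ¬ G.Adj a c := fun hc hac ↦
      hPQ.ne_of_mem_left haP (by simp) (hKL.eq_of_adj_of_deleteEdges hxK haK hc hac).1
    rcases hPQ.mem_left_or_mem_separator_of_adj haP hab with hbP | (rfl | rfl | rfl)
    · rcases hKL.mem_or_mem_or_mem b with hbK | hbL | hbS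
      · exact Or.inl ⟨hbP, hbK⟩
      · exact (hKL_adj hbL hab).elim
      · exact (Set.disjoint_left.1 hPS hbP hbS).elim
    · exact Or.inr (Or.inl rfl)
    · exact (hKL_adj hyL hab).elim
    · exact Or.inr (Or.inr rfl)
  rw [Set.disjoint_iff_inter_eq_empty, ← Set.not_nonempty_iff_eq_empty]
  rintro ⟨a, haP, haK⟩
  obtain ⟨q, hq⟩ := hPQ.right_nonempty
  have hq' : q ∉ ({x, z} : Set V) := fun hqxz ↦ hPQ.symm.notMem_separator_of_mem_left hq
    (by rcases hqxz with rfl | rfl <;> simp)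
  have ha' : a ∉ ({x, z} : Set V) := by
    rintro (rfl | rfl)
    exacts [hPQ.ne_of_mem_left haP (by simp) rfl, hPQ.ne_of_mem_left haP (by simp) rfl]
  exact hPQ.notMem_right_of_mem_left
    (hG.mem_of_adj_closed (Set.ncard_pair_le x z) hclosed ⟨haP, haK⟩ ha' hq').1 hq

theorem inter_separator_nonempty (hG : G.ThreeConnected)
    (hKL : (G.deleteEdges {s(x, y)}).IsSeparation S K L) (hxK : x ∈ K) (hyL : y ∈ L)
    (hPQ : G.IsSeparation {x, y, z} P Q) : (P ∩ S).Nonempty := by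
  by_contra hPS
  rw [Set.not_nonempty_iff_eq_empty, ← Set.disjoint_iff_inter_eq_empty] at hPS
  have hPK := hG.disjoint_left_of_disjoint_separator hKL hxK hyL hPQ hPS
  have hPL := hG.disjoint_left_of_disjoint_separator (by rw [Sym2.eq_swap]; exact hKL.symm)
    hyL hxK (by rwa [Set.insert_comm]) hPS
  obtain ⟨p, hp⟩ := hPQ.left_nonempty
  rcases hKL.mem_or_mem_or_mem p with h | h | h
  exacts [Set.disjoint_left.1 hPK hp h, Set.disjoint_left.1 hPL hp h,
    Set.disjoint_left.1 hPS hp h]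

theorem disjoint_right_of_separator_eq_pair (hG : G.ThreeConnected)
    (hKL : (G.deleteEdges {s(x, y)}).IsSeparation S K L) (hxK : x ∈ K) (hyL : y ∈ L)
    (hPQ : G.IsSeparation {x, y, z} P Q) {u v : V} (hS : S = {u, v}) (hu : u ∈ P) (hv : v ∈ Q)
    (hzK : z ∈ K) : Disjoint P L := by
  -- `P ∩ L` is attached to the rest of `G` only through `u` and `y`.
  have hclosed : ∀ a ∈ P ∩ L, ∀ b, G.Adj a b → b ∈ P ∩ L ∪ {u, y} := by
    rintro a ⟨haP, haL⟩ b hab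
    have hK_adj : ∀ {c}, c ∈ K → ¬ G.Adj a c := fun hc hac ↦
      hPQ.ne_of_mem_left haP (by simp) (hKL.eq_of_adj_of_deleteEdges hxK hc haL hac.symm).2
    rcases hPQ.mem_left_or_mem_separator_of_adj haP hab with hbP | (rfl | rfl | rfl)
    · rcases hKL.mem_or_mem_or_mem b with hbK | hbL | hbS
      · exact (hK_adj hbK hab).elim
      · exact Or.inl ⟨hbP, hbL⟩
      · rw [hS] at hbS
        rcases hbS with rfl | rfl
        · exact Or.inr (Or.inl rfl)
        · exact (hPQ.notMem_right_of_mem_left hbP hv).elim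
    · exact (hK_adj hxK hab).elim
    · exact Or.inr (Or.inr rfl)
    · exact (hK_adj hzK hab).elim
  rw [Set.disjoint_iff_inter_eq_empty, ← Set.not_nonempty_iff_eq_empty]
  rintro ⟨a, haP, haL⟩
  have hS_K : ∀ {c}, c ∈ K → c ≠ u := fun hc hcu ↦
    hKL.notMem_separator_of_mem_left hc (by rw [hS, hcu]; exact Or.inl rfl)
  have hS_L : ∀ {c}, c ∈ L → c ≠ u := fun hc hcu ↦
    hKL.symm.notMem_separator_of_mem_left hc (by rw [hS, hcu]; exact Or.inl rfl)
  have hx' : x ∉ ({u, y} : Set V) := by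
    rintro (hxu | hxy)
    exacts [hS_K hxK hxu, hKL.notMem_right_of_mem_left hxK (hxy ▸ hyL)]
  have ha' : a ∉ ({u, y} : Set V) := by
    rintro (hau | hay)
    exacts [hS_L haL hau, hPQ.ne_of_mem_left haP (by simp) hay]
  exact hPQ.ne_of_mem_left
    (hG.mem_of_adj_closed (Set.ncard_pair_le u y) hclosed ⟨haP, haL⟩ ha' hx').1 (by simp) rfl

theorem degreeN_le_three_of_mem_left [Finite V] (hG : G.ThreeConnected)
    (hKL : (G.deleteEdges {s(x, y)}).IsSeparation S K L) (hxK : x ∈ K) (hyL : y ∈ L)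
    (hPQ : G.IsSeparation {x, y, z} P Q) {u v : V} (hS : S = {u, v}) (hu : u ∈ P) (hv : v ∈ Q)
    (hzK : z ∈ K) : G.degreeN y ≤ 3 := by
  have hPL := hG.disjoint_right_of_separator_eq_pair hKL hxK hyL hPQ hS hu hv hzK
  have hQL := hG.disjoint_right_of_separator_eq_pair hKL hxK hyL hPQ.symm
    (by rw [hS, Set.pair_comm]) hv hu hzK
  have hL : L ⊆ {y} := by
    intro l hl
    rcases hPQ.mem_or_mem_or_mem l with h | h | (rfl | rfl | rfl)
    · exact (Set.disjoint_right.1 hPL hl h).elim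
    · exact (Set.disjoint_right.1 hQL hl h).elim
    · exact (hKL.notMem_right_of_mem_left hxK hl).elim
    · rfl
    · exact (hKL.notMem_right_of_mem_left hzK hl).elim
  have hN : G.neighborSet y ⊆ insert x S := by
    intro b hb
    rcases hKL.mem_or_mem_or_mem b with hbK | hbL | hbS
    · exact Or.inl (hKL.eq_of_adj_of_deleteEdges hxK hbK hyL (G.adj_symm hb)).1
    · exact (G.irrefl (by rwa [Set.mem_singleton_iff.1 (hL hbL)] at hb)).elim
    · exact Or.inr hbS
  calc G.degreeN y ≤ (insert x S).ncard := Set.ncard_le_ncard hN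
    _ ≤ S.ncard + 1 := Set.ncard_insert_le x S
    _ ≤ 3 := by rw [hS]; linarith [Set.ncard_pair_le u v]

theorem degreeN_le_three_or_degreeN_le_three [Finite V] (hG : G.ThreeConnected)
    (hKL : (G.deleteEdges {s(x, y)}).IsSeparation S K L) (hxK : x ∈ K) (hyL : y ∈ L)
    (hPQ : G.IsSeparation {x, y, z} P Q) (hS : S.ncard ≤ 2) :
    G.degreeN x ≤ 3 ∨ G.degreeN y ≤ 3 := by
  obtain ⟨u, huP, huS⟩ := hG.inter_separator_nonempty hKL hxK hyL hPQ
  obtain ⟨v, hvQ, hvS⟩ := hG.inter_separator_nonempty hKL hxK hyL hPQ.symm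
  have hSuv : S = {u, v} := by
    refine (Set.eq_of_subset_of_ncard_le ?_ ?_).symm
    · rintro _ (rfl | rfl)
      exacts [huS, hvS]
    · rwa [Set.ncard_pair (fun huv ↦ hPQ.notMem_right_of_mem_left huP (by rwa [huv]))]
  rcases hKL.mem_or_mem_or_mem z with hzK | hzL | hzS
  · exact Or.inr (hG.degreeN_le_three_of_mem_left hKL hxK hyL hPQ hSuv huP hvQ hzK)
  · refine Or.inl (hG.degreeN_le_three_of_mem_left (by rw [Sym2.eq_swap]; exact hKL.symm)
      hyL hxK (by rwa [Set.insert_comm]) hSuv huP hvQ hzL)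
  · rw [hSuv] at hzS
    rcases hzS with rfl | rfl
    exacts [(hPQ.ne_of_mem_left huP (by simp) rfl).elim,
      (hPQ.symm.ne_of_mem_left hvQ (by simp) rfl).elim]

end ThreeConnected

end SimpleGraph

open SimpleGraph in
/-- In a minimally 3-connected finite simple graph, every edge joining two
vertices of degree at least 4 is contractible. -/
theorem statement3 {V : Type} [Finite V] (G : SimpleGraph V)
    (hmin : MinimallyThreeConnected G) (x y : V) (hxy : G.Adj x y)
    (hx : 4 ≤ G.degreeN x) (hy : 4 ≤ G.degreeN y) :
    ThreeConnected (G.contractEdge x y) := by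
  by_contra hcontr
  have hcard : 5 ≤ Nat.card V := by linarith [G.degreeN_add_one_le_card x]
  obtain ⟨z, P, Q, hPQ⟩ :=
    hmin.1.exists_isSeparation_of_not_threeConnected_contractEdge hxy.ne hcard hcontr
  obtain ⟨S, K, L, hS, hKL, hxK, hyL⟩ := hmin.exists_isSeparation_deleteEdges hxy
  rcases hmin.1.degreeN_le_three_or_degreeN_le_three hKL hxK hyL hPQ hS with h | h <;> omega
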